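/- arXiv:1704.05491 — 2 statements merged into one kernel-verified Lean document; each statement's English description precedes it below -/
import Mathlib

section
/- Let P_1, …, P_N be discrete probability measures on ℝ^d and λ_1, …, λ_N > 0 with ∑_{i=1}^N λ_i = 1. Let P̄ be a barycenter and let P̄_org minimize φ among probability measures supported in S_org = ∪_{i=1}^N supp(P_i). Then φ(P̄_org) ≤ 2 · φ(P̄). -/
open MeasureTheory ENNReal

/-- Points of `ℝ^d`. -/
abbrev Pt (d : ℕ) := EuclideanSpace ℝ (Fin d)

/-- The set of atoms (support points) of a measure. -/
def msupp {α : Type*} [MeasurableSpace α] (P : Measure α) : Set α := {x | P {x} ≠ 0}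

/-- A measure is finitely supported (discrete) if its set of atoms is finite and
carries all the mass. -/
def FinitelySupported {α : Type*} [MeasurableSpace α] (P : Measure α) : Prop :=
  (msupp P).Finite ∧ P (msupp P)ᶜ = 0

/-- Finite second moment. -/
def FiniteSecondMoment {d : ℕ} (P : Measure (Pt d)) : Prop :=
  ∫⁻ x, ENNReal.ofReal (‖x‖ ^ 2) ∂P < ⊤

/-- The squared 2-Wasserstein distance: the infimum of `∫ ‖x - y‖² dπ` over all
couplings `π` of `P` and `Q`. -/
noncomputable def W2sq {d : ℕ} (P Q : Measure (Pt d)) : ℝ≥0∞ :=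
  ⨅ π ∈ {π : Measure (Pt d × Pt d) | π.map Prod.fst = P ∧ π.map Prod.snd = Q},
    ∫⁻ p, ENNReal.ofReal (‖p.1 - p.2‖ ^ 2) ∂π

/-- The barycenter objective `φ(P) = ∑ i, λ i * W₂(P, P i)²`. -/
noncomputable def phi {d N : ℕ} (l : Fin N → ℝ) (Pm : Fin N → Measure (Pt d))
    (P : Measure (Pt d)) : ℝ≥0∞ :=
  ∑ i, ENNReal.ofReal (l i) * W2sq P (Pm i)

/-- A (Wasserstein) barycenter: a probability measure with finite second moment
minimizing `φ` among all such measures. -/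
def IsBarycenter {d N : ℕ} (l : Fin N → ℝ) (Pm : Fin N → Measure (Pt d))
    (P : Measure (Pt d)) : Prop :=
  IsProbabilityMeasure P ∧ FiniteSecondMoment P ∧
    ∀ Q : Measure (Pt d), IsProbabilityMeasure Q → FiniteSecondMoment Q →
      phi l Pm P ≤ phi l Pm Q

/-- The set `S` of weighted centroids of combinations of support points,
one from each measure. -/
def centroidSet {d N : ℕ} (l : Fin N → ℝ) (Pm : Fin N → Measure (Pt d)) : Set (Pt d) :=
  {y | ∃ x : Fin N → Pt d, (∀ i, x i ∈ msupp (Pm i)) ∧ y = ∑ i, l i • x i}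

/-- The union `S_org` of the supports of the measures. -/
def origSupport {d N : ℕ} (Pm : Fin N → Measure (Pt d)) : Set (Pt d) :=
  ⋃ i, msupp (Pm i)

/-!
Every `P_j` is supported in `S_org`, so `φ(P̄_org) ≤ φ(P_j)` for all `j`, and averaging,
`φ(P̄_org) ≤ ∑ⱼ λⱼ φ(P_j) = ∑ᵢⱼ λᵢ λⱼ W₂(Pᵢ, Pⱼ)²`. To compare this with `φ(Q)` for any
probability measure `Q`, disintegrate couplings `πᵢ = Q ⊗ κᵢ` of `Q` and `Pᵢ` and glue them over
`Q` by the conditionally independent coupling `x ↦ ⨂ₖ κₖ(x)`. Pointwise, the variance identity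
`∑ᵢⱼ λᵢ λⱼ ‖yᵢ - yⱼ‖² = 2 ∑ᵢ λᵢ ‖yᵢ - ȳ‖² ≤ 2 ∑ᵢ λᵢ ‖x - yᵢ‖²` holds; integrating it gives
`∑ᵢⱼ λᵢ λⱼ W₂(Pᵢ, Pⱼ)² ≤ 2 ∑ᵢ λᵢ cost(πᵢ)`, and the infimum over the couplings is `2 φ(Q)`.
-/

open ProbabilityTheory Finset
open scoped RealInnerProductSpace

section WeightedVariance

variable {E ι : Type*} [NormedAddCommGroup E] [InnerProductSpace ℝ E] [Fintype ι]

theorem sum_sum_mul_norm_sub_sq_le (l : ι → ℝ) (hsum : ∑ i, l i = 1) (x : E) (y : ι → E) :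
    ∑ i, ∑ j, l i * l j * ‖y i - y j‖ ^ 2 ≤ 2 * ∑ i, l i * ‖x - y i‖ ^ 2 := by
  set u : ι → E := fun i => y i - x
  have hy : ∀ i j, y i - y j = u i - u j := fun i j => by simp [u]
  have hx : ∀ i, ‖x - y i‖ = ‖u i‖ := fun i => norm_sub_rev _ _
  have hmean : ‖∑ i, l i • u i‖ ^ 2 = ∑ i, ∑ j, l i * l j * ⟪u i, u j⟫ := by
    rw [← real_inner_self_eq_norm_sq, sum_inner]
    simp only [inner_sum, real_inner_smul_left, real_inner_smul_right]
    exact sum_congr rfl fun i _ => sum_congr rfl fun j _ => by ring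
  have hsym : ∑ i, ∑ j, l i * l j * ‖u j‖ ^ 2 = ∑ j, l j * ‖u j‖ ^ 2 := by
    rw [sum_comm]
    exact sum_congr rfl fun j _ => by rw [← sum_mul, ← sum_mul, hsum, one_mul]
  have hexpand : ∑ i, ∑ j, l i * l j * ‖y i - y j‖ ^ 2
      = 2 * ∑ i, l i * ‖x - y i‖ ^ 2 - 2 * ‖∑ i, l i • u i‖ ^ 2 := by
    simp only [hmean, hy, hx, norm_sub_sq_real, mul_sub, mul_add, sum_add_distrib,
      sum_sub_distrib, ← sum_mul, ← mul_sum, hsum, mul_one, mul_left_comm _ (2 : ℝ), hsym]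
    ring
  rw [hexpand]
  nlinarith [sq_nonneg ‖∑ i, l i • u i‖]

theorem sum_sum_ofReal_mul_norm_sub_sq_le (l : ι → ℝ) (hl : ∀ i, 0 ≤ l i)
    (hsum : ∑ i, l i = 1) (x : E) (y : ι → E) :
    ∑ i, ∑ j, ENNReal.ofReal (l i) * (ENNReal.ofReal (l j) * ENNReal.ofReal (‖y i - y j‖ ^ 2))
      ≤ 2 * ∑ i, ENNReal.ofReal (l i) * ENNReal.ofReal (‖x - y i‖ ^ 2) := by
  have hterm : ∀ i j, 0 ≤ l i * l j * ‖y i - y j‖ ^ 2 := fun i j =>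
    mul_nonneg (mul_nonneg (hl i) (hl j)) (sq_nonneg _)
  have hlhs : ∑ i, ∑ j, ENNReal.ofReal (l i) *
        (ENNReal.ofReal (l j) * ENNReal.ofReal (‖y i - y j‖ ^ 2))
      = ENNReal.ofReal (∑ i, ∑ j, l i * l j * ‖y i - y j‖ ^ 2) := by
    rw [ENNReal.ofReal_sum_of_nonneg fun i _ => sum_nonneg fun j _ => hterm i j]
    refine sum_congr rfl fun i _ => ?_
    rw [ENNReal.ofReal_sum_of_nonneg fun j _ => hterm i j]
    refine sum_congr rfl fun j _ => ?_
    rw [ENNReal.ofReal_mul (mul_nonneg (hl i) (hl j)), ENNReal.ofReal_mul (hl i), mul_assoc]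
  have hrhs : 2 * ∑ i, ENNReal.ofReal (l i) * ENNReal.ofReal (‖x - y i‖ ^ 2)
      = ENNReal.ofReal (2 * ∑ i, l i * ‖x - y i‖ ^ 2) := by
    rw [ENNReal.ofReal_mul zero_le_two, ENNReal.ofReal_ofNat,
      ENNReal.ofReal_sum_of_nonneg fun i _ => mul_nonneg (hl i) (sq_nonneg _)]
    simp_rw [ENNReal.ofReal_mul (hl _)]
  rw [hlhs, hrhs]
  exact ENNReal.ofReal_le_ofReal (sum_sum_mul_norm_sub_sq_le l hsum x y)

end WeightedVariance

theorem MeasureTheory.Measure.pi_map_eval_pair {ι E : Type*} [Fintype ι] [MeasurableSpace E]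
    (ν : ι → Measure E) [∀ i, IsProbabilityMeasure (ν i)] {i j : ι} (hij : i ≠ j) :
    (Measure.pi ν).map (fun w => (w i, w j)) = (ν i).prod (ν j) := by
  have hind := (iIndepFun_pi (X := fun _ => id) fun k => aemeasurable_id (μ := ν k)).indepFun hij
  simp only [id] at hind
  rw [(indepFun_iff_map_prod_eq_prod_map_map (measurable_pi_apply i).aemeasurable
      (measurable_pi_apply j).aemeasurable).1 hind,
    (measurePreserving_eval ν i).map_eq, (measurePreserving_eval ν j).map_eq]

theorem sum_lintegral_le_lintegral_sum {α ι : Type*} [MeasurableSpace α] (μ : Measure α)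
    (s : Finset ι) (f : ι → α → ℝ≥0∞) :
    ∑ i ∈ s, ∫⁻ x, f i x ∂μ ≤ ∫⁻ x, ∑ i ∈ s, f i x ∂μ := by
  induction s using Finset.cons_induction with
  | empty => simp
  | cons a s ha ih =>
    simp only [sum_cons]
    exact (add_le_add_right ih _).trans (le_lintegral_add _ _)

theorem sum_sum_mul_lintegral_le {α ι : Type*} [MeasurableSpace α] [Fintype ι] (μ : Measure α)
    (a : ι → ℝ≥0∞) {c : ι → ι → α → ℝ≥0∞} {h : ι → α → ℝ≥0∞} (hh : ∀ i, Measurable (h i))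
    (hch : ∀ x, ∑ i, ∑ j, a i * (a j * c i j x) ≤ 2 * ∑ i, a i * h i x) :
    ∑ i, ∑ j, a i * (a j * ∫⁻ x, c i j x ∂μ) ≤ 2 * ∑ i, a i * ∫⁻ x, h i x ∂μ :=
  calc ∑ i, ∑ j, a i * (a j * ∫⁻ x, c i j x ∂μ)
      ≤ ∑ i, ∑ j, ∫⁻ x, a i * (a j * c i j x) ∂μ := by
        gcongr with i _ j _
        exact (mul_le_mul_right (lintegral_const_mul_le _ _) _).trans (lintegral_const_mul_le _ _)
    _ ≤ ∫⁻ x, ∑ i, ∑ j, a i * (a j * c i j x) ∂μ :=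
        (sum_le_sum fun i _ => sum_lintegral_le_lintegral_sum μ _ _).trans
          (sum_lintegral_le_lintegral_sum μ _ _)
    _ ≤ ∫⁻ x, 2 * ∑ i, a i * h i x ∂μ := lintegral_mono hch
    _ = 2 * ∑ i, a i * ∫⁻ x, h i x ∂μ := by
        rw [lintegral_const_mul _ (by fun_prop), lintegral_finsetSum _ fun i _ => by fun_prop]
        simp_rw [lintegral_const_mul _ (hh _)]

theorem sum_sum_lintegral_pi_le {E ι : Type*} [NormedAddCommGroup E] [InnerProductSpace ℝ E]
    [MeasurableSpace E] [BorelSpace E] [Fintype ι]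
    (ν : ι → Measure E) [∀ i, IsProbabilityMeasure (ν i)]
    (l : ι → ℝ) (hl : ∀ i, 0 ≤ l i) (hsum : ∑ i, l i = 1) (x : E) :
    ∑ i, ∑ j, ENNReal.ofReal (l i) *
        (ENNReal.ofReal (l j) * ∫⁻ w, ENNReal.ofReal (‖w i - w j‖ ^ 2) ∂Measure.pi ν)
      ≤ 2 * ∑ i, ENNReal.ofReal (l i) * ∫⁻ y, ENNReal.ofReal (‖x - y‖ ^ 2) ∂ν i := by
  simp_rw [← (measurePreserving_eval ν _).lintegral_comp
    (f := fun y => ENNReal.ofReal (‖x - y‖ ^ 2)) (by fun_prop)]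
  exact sum_sum_mul_lintegral_le _ _ (fun i => by fun_prop)
    fun w => sum_sum_ofReal_mul_norm_sub_sq_le l hl hsum x w

def couplings {α β : Type*} [MeasurableSpace α] [MeasurableSpace β] (P : Measure α)
    (Q : Measure β) : Set (Measure (α × β)) :=
  {π | π.map Prod.fst = P ∧ π.map Prod.snd = Q}

theorem prod_mem_couplings {α β : Type*} [MeasurableSpace α] [MeasurableSpace β]
    (P : Measure α) (Q : Measure β) [IsProbabilityMeasure P] [IsProbabilityMeasure Q] :
    P.prod Q ∈ couplings P Q :=
  ⟨Measure.fst_prod, Measure.snd_prod⟩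

section Transport

variable {d : ℕ}

noncomputable def transportCost (π : Measure (Pt d × Pt d)) : ℝ≥0∞ :=
  ∫⁻ p, ENNReal.ofReal (‖p.1 - p.2‖ ^ 2) ∂π

theorem W2sq_eq_iInf (P Q : Measure (Pt d)) :
    W2sq P Q = ⨅ π ∈ couplings P Q, transportCost π := rfl

theorem W2sq_le_transportCost {P Q : Measure (Pt d)} {π : Measure (Pt d × Pt d)}
    (hπ : π ∈ couplings P Q) : W2sq P Q ≤ transportCost π :=
  iInf₂_le π hπ

theorem W2sq_self (P : Measure (Pt d)) : W2sq P P = 0 := by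
  refine le_antisymm ((W2sq_le_transportCost (π := P.map fun x => (x, x)) ?_).trans_eq ?_) zero_le
  · constructor <;> rw [Measure.map_map (by fun_prop) (by fun_prop)] <;> exact Measure.map_id
  · rw [transportCost, lintegral_map (by fun_prop) (by fun_prop)]
    simp

theorem W2sq_comp_le_lintegral_prod (Q : Measure (Pt d)) (κ η : Kernel (Pt d) (Pt d))
    [IsMarkovKernel κ] [IsMarkovKernel η] :
    W2sq (κ ∘ₘ Q) (η ∘ₘ Q) ≤ ∫⁻ x, transportCost ((κ x).prod (η x)) ∂Q := by
  refine (W2sq_le_transportCost (π := (κ ×ₖ η) ∘ₘ Q) ⟨?_, ?_⟩).trans_eq ?_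
  · rw [Measure.map_comp _ _ measurable_fst, ← Kernel.fst_eq, Kernel.fst_prod]
  · rw [Measure.map_comp _ _ measurable_snd, ← Kernel.snd_eq, Kernel.snd_prod]
  · rw [transportCost, Measure.lintegral_bind (Kernel.aemeasurable _) (by fun_prop)]
    simp_rw [Kernel.prod_apply]
    rfl

theorem W2sq_comp_le_lintegral_pi {ι : Type*} [Fintype ι] (Q : Measure (Pt d))
    (κ : ι → Kernel (Pt d) (Pt d)) [∀ i, IsMarkovKernel (κ i)] (i j : ι) :
    W2sq (κ i ∘ₘ Q) (κ j ∘ₘ Q) ≤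
      ∫⁻ x, ∫⁻ w, ENNReal.ofReal (‖w i - w j‖ ^ 2) ∂Measure.pi (fun k => κ k x) ∂Q := by
  rcases eq_or_ne i j with rfl | hij
  · simp [W2sq_self]
  · refine (W2sq_comp_le_lintegral_prod Q (κ i) (κ j)).trans_eq (lintegral_congr fun x => ?_)
    rw [transportCost, ← Measure.pi_map_eval_pair (fun k => κ k x) hij,
      lintegral_map (by fun_prop) (by fun_prop)]

theorem sum_sum_W2sq_le_of_mem_couplings {ι : Type*} [Fintype ι] (l : ι → ℝ)
    (hl : ∀ i, 0 ≤ l i) (hsum : ∑ i, l i = 1) (Q : Measure (Pt d)) [IsFiniteMeasure Q]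
    (P : ι → Measure (Pt d)) (π : ι → Measure (Pt d × Pt d))
    (hπ : ∀ i, π i ∈ couplings Q (P i)) :
    ∑ i, ∑ j, ENNReal.ofReal (l i) * (ENNReal.ofReal (l j) * W2sq (P i) (P j)) ≤
      2 * ∑ i, ENNReal.ofReal (l i) * transportCost (π i) := by
  have hfin : ∀ i, IsFiniteMeasure (π i) := fun i => by
    have : IsFiniteMeasure ((π i).map Prod.fst) := (hπ i).1 ▸ ‹_›
    exact Measure.isFiniteMeasure_of_map measurable_fst.aemeasurable
  set κ := fun i => (π i).condKernel
  have hdis : ∀ i, Q ⊗ₘ κ i = π i := fun i => by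
    rw [← (hπ i).1]
    exact (π i).disintegrate _
  have hP : ∀ i, P i = κ i ∘ₘ Q := fun i => by
    rw [← (hπ i).2, ← hdis i]
    exact Measure.snd_compProd _ _
  have hcost : ∀ i, transportCost (π i) = ∫⁻ x, ∫⁻ y, ENNReal.ofReal (‖x - y‖ ^ 2) ∂κ i x ∂Q :=
    fun i => by rw [← hdis i, transportCost, Measure.lintegral_compProd (by fun_prop)]
  simp_rw [hcost, hP]
  calc _ ≤ ∑ i, ∑ j, ENNReal.ofReal (l i) * (ENNReal.ofReal (l j) *
        ∫⁻ x, ∫⁻ w, ENNReal.ofReal (‖w i - w j‖ ^ 2) ∂Measure.pi (fun k => κ k x) ∂Q) := by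
        gcongr with i _ j _
        exact W2sq_comp_le_lintegral_pi Q κ i j
    _ ≤ _ := sum_sum_mul_lintegral_le Q _
        (fun i => Measurable.lintegral_kernel_prod_right (by fun_prop))
        fun x => sum_sum_lintegral_pi_le (fun k => κ k x) l hl hsum x

theorem phi_eq_iInf_couplings {N : ℕ} (l : Fin N → ℝ) (Pm : Fin N → Measure (Pt d))
    (Q : Measure (Pt d)) (hne : ∀ i, (couplings Q (Pm i)).Nonempty) :
    phi l Pm Q =
      ⨅ π : (∀ i, couplings Q (Pm i)), ∑ i, ENNReal.ofReal (l i) * transportCost (π i).1 := by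
  have := fun i => (hne i).to_subtype
  rw [ENNReal.iInf_sum]
  · refine sum_congr rfl fun i _ => ?_
    rw [W2sq_eq_iInf, iInf_subtype', ENNReal.mul_iInf fun h => absurd h ENNReal.ofReal_ne_top]
    exact ((Function.surjective_eval (β := fun i => couplings Q (Pm i)) i).iInf_comp
      fun π => ENNReal.ofReal (l i) * transportCost π.1).symm
  · intro _ π ρ
    refine ⟨fun i => if transportCost (π i).1 ≤ transportCost (ρ i).1 then π i else ρ i,
      fun i _ => ?_⟩
    dsimp only
    split_ifs with h
    · exact ⟨le_rfl, by gcongr⟩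
    · exact ⟨by gcongr; exact (not_le.1 h).le, le_rfl⟩

theorem sum_mul_phi_le_two_mul_phi {N : ℕ} (l : Fin N → ℝ) (hl : ∀ i, 0 ≤ l i)
    (hsum : ∑ i, l i = 1) (Pm : Fin N → Measure (Pt d)) [∀ i, IsProbabilityMeasure (Pm i)]
    (Q : Measure (Pt d)) [IsProbabilityMeasure Q] :
    ∑ j, ENNReal.ofReal (l j) * phi l Pm (Pm j) ≤ 2 * phi l Pm Q := by
  rw [phi_eq_iInf_couplings l Pm Q fun i => ⟨_, prod_mem_couplings Q (Pm i)⟩,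
    ENNReal.mul_iInf_of_ne two_ne_zero ENNReal.ofNat_ne_top]
  refine le_iInf fun π => ?_
  refine Eq.trans_le ?_ (sum_sum_W2sq_le_of_mem_couplings l hl hsum Q Pm _ fun i => (π i).2)
  simp_rw [phi, mul_sum]

end Transport

theorem orig_support_two_approx_general {d N : ℕ}
    (l : Fin N → ℝ) (Pm : Fin N → Measure (Pt d))
    (hl : ∀ i, 0 < l i) (hsum : ∑ i, l i = 1)
    (hprob : ∀ i, IsProbabilityMeasure (Pm i))
    (hfin : ∀ i, FinitelySupported (Pm i))
    (Pbar : Measure (Pt d)) (hbar : IsBarycenter l Pm Pbar)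
    (Porg : Measure (Pt d))
    (hPorgOpt : ∀ Q : Measure (Pt d), IsProbabilityMeasure Q →
      Q (origSupport Pm)ᶜ = 0 → phi l Pm Porg ≤ phi l Pm Q) :
    phi l Pm Porg ≤ 2 * phi l Pm Pbar := by
  have := hbar.1
  have hsupp : ∀ j, Pm j (origSupport Pm)ᶜ = 0 := fun j =>
    measure_mono_null (Set.compl_subset_compl.2 (Set.subset_iUnion _ j)) (hfin j).2
  calc phi l Pm Porg = ∑ j, ENNReal.ofReal (l j) * phi l Pm Porg := by
        rw [← sum_mul, ← ENNReal.ofReal_sum_of_nonneg fun j _ => (hl j).le, hsum,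
          ENNReal.ofReal_one, one_mul]
    _ ≤ ∑ j, ENNReal.ofReal (l j) * phi l Pm (Pm j) := by
        gcongr with j
        exact hPorgOpt _ (hprob j) (hsupp j)
    _ ≤ 2 * phi l Pm Pbar := sum_mul_phi_le_two_mul_phi l (fun i => (hl i).le) hsum Pm Pbar

/-- an approximate barycenter restricted to the union of the
original supports is a 2-approximation: φ(P̄_org) ≤ 2 φ(P̄). -/
theorem orig_support_two_approx {d N : ℕ}
    (l : Fin N → ℝ) (Pm : Fin N → Measure (Pt d))
    (hl : ∀ i, 0 < l i) (hsum : ∑ i, l i = 1)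
    (hprob : ∀ i, IsProbabilityMeasure (Pm i))
    (hfin : ∀ i, FinitelySupported (Pm i))
    (Pbar : Measure (Pt d)) (hbar : IsBarycenter l Pm Pbar)
    (Porg : Measure (Pt d)) (hPorgProb : IsProbabilityMeasure Porg)
    (hPorgSupp : Porg (origSupport Pm)ᶜ = 0)
    (hPorgOpt : ∀ Q : Measure (Pt d), IsProbabilityMeasure Q →
      Q (origSupport Pm)ᶜ = 0 → phi l Pm Porg ≤ phi l Pm Q) :
    phi l Pm Porg ≤ 2 * phi l Pm Pbar :=
  orig_support_two_approx_general l Pm hl hsum hprob hfin Pbar hbar Porg hPorgOpt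
end

section
/- Let P_1, …, P_N be discrete probability measures on ℝ^d and λ_1, …, λ_N > 0 with ∑_{i=1}^N λ_i = 1, and let P̄ be a barycenter. Let n : ℝ^d → S_org be any map assigning to each point a nearest point of S_org = ∪_{i=1}^N supp(P_i) (i.e. ‖n(x) − x‖ ≤ ‖s − x‖ for all s ∈ S_org). Then the rounded measure P̄_r, the pushforward of P̄ under n, satisfies φ(P̄_r) ≤ 2 · φ(P̄). -/
open MeasureTheory ENNReal

/-!
Glue near-optimal couplings of `P̄` with each `Pᵢ` into one measure `γ` on pairs `(x, (yᵢ)ᵢ)`,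
making the `yᵢ` conditionally independent given `x`; since every `Pᵢ` is discrete, the conditional
laws are just Radon–Nikodym densities of the fibres `{yᵢ = c}`. Write `ȳ = ∑ λⱼ yⱼ`. Pushing `γ`
forward by `ȳ` gives a competitor `Q` with `φ(Q) ≤ ∫ ∑ λᵢ ‖ȳ - yᵢ‖² dγ`, so the weighted Pythagoras
identity `∑ λᵢ ‖x - yᵢ‖² = ‖x - ȳ‖² + ∑ λᵢ ‖ȳ - yᵢ‖²` and the minimality of `P̄` force
`∫ ‖x - ȳ‖² dγ` to be at most the suboptimality of the couplings. As the support points `yᵢ` are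
no closer to `x` than `n(x)`, the same identity and Young's inequality give pointwise
`∑ λᵢ ‖n(x) - yᵢ‖² ≤ (2 + η) ∑ λᵢ ‖x - yᵢ‖² + (1 + η⁻¹) ‖x - ȳ‖²`; integrate against `γ`, then
let the suboptimality and `η` tend to `0`.
-/

section WeightedMean

variable {E ι : Type*} [NormedAddCommGroup E] [InnerProductSpace ℝ E] [Fintype ι]

theorem sum_mul_norm_sub_sq_eq {l : ι → ℝ} (hl : ∑ i, l i = 1) (z : E) (y : ι → E) :
    ∑ i, l i * ‖z - y i‖ ^ 2
      = ‖z - ∑ j, l j • y j‖ ^ 2 + ∑ i, l i * ‖∑ j, l j • y j - y i‖ ^ 2 := by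
  set m := ∑ j, l j • y j
  have hcentred : ∑ i, l i • (m - y i) = 0 := by
    simp only [smul_sub, Finset.sum_sub_distrib, ← Finset.sum_smul, hl, one_smul, m, sub_self]
  calc ∑ i, l i * ‖z - y i‖ ^ 2
      = ∑ i, (l i * ‖z - m‖ ^ 2 + 2 * inner ℝ (z - m) (l i • (m - y i)) + l i * ‖m - y i‖ ^ 2) := by
        refine Finset.sum_congr rfl fun i _ => ?_
        rw [show z - y i = (z - m) + (m - y i) by abel, norm_add_sq_real, real_inner_smul_right]
        ring
    _ = (∑ i, l i) * ‖z - m‖ ^ 2 + 2 * inner ℝ (z - m) (∑ i, l i • (m - y i))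
          + ∑ i, l i * ‖m - y i‖ ^ 2 := by
        rw [Finset.sum_add_distrib, Finset.sum_add_distrib, Finset.sum_mul, inner_sum,
          Finset.mul_sum]
    _ = _ := by rw [hl, hcentred, inner_zero_right]; ring

theorem norm_add_sq_le_one_add_mul {F : Type*} [SeminormedAddGroup F] {η : ℝ} (hη : 0 < η)
    (a b : F) : ‖a + b‖ ^ 2 ≤ (1 + η) * ‖a‖ ^ 2 + (1 + η⁻¹) * ‖b‖ ^ 2 := by
  have young : 2 * ‖a‖ * ‖b‖ ≤ η * ‖a‖ ^ 2 + η⁻¹ * ‖b‖ ^ 2 := by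
    have hgap : η * (η * ‖a‖ ^ 2 + η⁻¹ * ‖b‖ ^ 2 - 2 * ‖a‖ * ‖b‖) = (η * ‖a‖ - ‖b‖) ^ 2 := by
      field_simp; ring
    nlinarith [sq_nonneg (η * ‖a‖ - ‖b‖)]
  nlinarith [norm_add_le a b, norm_nonneg (a + b), norm_nonneg a, norm_nonneg b]

theorem sum_mul_norm_sub_sq_le_of_forall_norm_sub_le {l : ι → ℝ} (hl0 : ∀ i, 0 ≤ l i)
    (hl : ∑ i, l i = 1) {η : ℝ} (hη : 0 < η) {x z : E} {y : ι → E}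
    (hz : ∀ i, ‖z - x‖ ≤ ‖x - y i‖) :
    ∑ i, l i * ‖z - y i‖ ^ 2
      ≤ (2 + η) * ∑ i, l i * ‖x - y i‖ ^ 2 + (1 + η⁻¹) * ‖x - ∑ j, l j • y j‖ ^ 2 := by
  set m := ∑ j, l j • y j
  have hzx : ‖z - x‖ ^ 2 ≤ ∑ i, l i * ‖x - y i‖ ^ 2 :=
    calc ‖z - x‖ ^ 2 = ∑ i, l i * ‖z - x‖ ^ 2 := by rw [← Finset.sum_mul, hl, one_mul]
      _ ≤ _ := Finset.sum_le_sum fun i _ =>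
        mul_le_mul_of_nonneg_left (pow_le_pow_left₀ (norm_nonneg _) (hz i) 2) (hl0 i)
  have hzm : ‖z - m‖ ^ 2 ≤ (1 + η) * ‖z - x‖ ^ 2 + (1 + η⁻¹) * ‖x - m‖ ^ 2 := by
    simpa using norm_add_sq_le_one_add_mul hη (z - x) (x - m)
  have hV : 0 ≤ ∑ i, l i * ‖m - y i‖ ^ 2 :=
    Finset.sum_nonneg fun i _ => mul_nonneg (hl0 i) (sq_nonneg _)
  rw [sum_mul_norm_sub_sq_eq hl z y]
  have := sum_mul_norm_sub_sq_eq hl x y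
  nlinarith

theorem norm_sum_smul_sq_le {l : ι → ℝ} (hl0 : ∀ i, 0 ≤ l i) (hl : ∑ i, l i = 1) (y : ι → E) :
    ‖∑ j, l j • y j‖ ^ 2 ≤ ∑ i, l i * ‖y i‖ ^ 2 := by
  have h := sum_mul_norm_sub_sq_eq hl 0 y
  simp only [zero_sub, norm_neg] at h
  rw [h]
  exact le_add_of_nonneg_right (Finset.sum_nonneg fun i _ => mul_nonneg (hl0 i) (sq_nonneg _))

end WeightedMean

theorem Finset.sum_piFinset_prod_mul {ι β R : Type*} [Fintype ι] [DecidableEq ι]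
    [CommSemiring R] (A : ι → Finset β) (f : ι → β → R) (g : β → R) (i : ι)
    (hf : ∀ j ≠ i, ∑ c ∈ A j, f j c = 1) :
    ∑ y ∈ Fintype.piFinset A, (∏ j, f j (y j)) * g (y i) = ∑ c ∈ A i, f i c * g c := by
  set h : ι → β → R := fun j c => f j c * if j = i then g c else 1
  have hprod : ∀ y : ι → β, ∏ j, h j (y j) = (∏ j, f j (y j)) * g (y i) := by
    intro y
    simp only [h, Finset.prod_mul_distrib, Finset.prod_ite_eq', Finset.mem_univ, if_true]
  have hsum : ∀ j, ∑ c ∈ A j, h j c = if j = i then ∑ c ∈ A i, f i c * g c else 1 := by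
    intro j
    by_cases hj : j = i
    · subst hj; simp [h]
    · simp [h, hj, hf j hj]
  simp_rw [← hprod, ← Finset.prod_univ_sum, hsum, Finset.prod_ite_eq']
  simp

section Gluing

open Measure

variable {α β : Type*} [MeasurableSpace α] [MeasurableSpace β]

theorem MeasureTheory.Measure.eq_sum_map_prodMk_of_ae_snd_mem [MeasurableSingletonClass β]
    (ρ : Measure (α × β)) (s : Finset β) (hs : ∀ᵐ p ∂ρ, p.2 ∈ s) :
    ρ = ∑ c ∈ s, ((ρ.restrict (Prod.snd ⁻¹' {c})).map Prod.fst).map (fun x => (x, c)) := by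
  refine ext_of_lintegral _ fun g hg => ?_
  have hfibre : ∀ c, MeasurableSet (Prod.snd ⁻¹' {c} : Set (α × β)) :=
    fun c => measurable_snd (measurableSet_singleton c)
  have hsplit : ∀ᵐ p ∂ρ, g p = ∑ c ∈ s, (Prod.snd ⁻¹' {c}).indicator g p := by
    filter_upwards [hs] with p hp
    rw [Finset.sum_eq_single_of_mem p.2 hp fun c _ hc =>
      Set.indicator_of_notMem (s := Prod.snd ⁻¹' {c}) (a := p) hc.symm g]
    exact (Set.indicator_of_mem (s := Prod.snd ⁻¹' {p.2}) rfl g).symm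
  rw [lintegral_congr_ae hsplit, lintegral_finsetSum _ fun c _ => hg.indicator (hfibre c),
    lintegral_finsetSum_measure]
  refine Finset.sum_congr rfl fun c _ => ?_
  rw [lintegral_indicator (hfibre c), lintegral_map hg (by fun_prop),
    lintegral_map (by fun_prop) measurable_fst]
  refine setLIntegral_congr_fun (hfibre c) fun p hp => ?_
  obtain rfl : p.2 = c := hp
  rfl

section FiniteDecomposition

variable {ι : Type*} {s : Finset ι} {ν : ι → Measure α} {μ : Measure α} [IsFiniteMeasure μ]

theorem MeasureTheory.Measure.withDensity_rnDeriv_eq_of_sum_eq (h : ∑ c ∈ s, ν c = μ) {c : ι}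
    (hc : c ∈ s) : μ.withDensity ((ν c).rnDeriv μ) = ν c := by
  have hle : ν c ≤ μ := h ▸ Finset.single_le_sum (fun _ _ => Measure.zero_le _) hc
  have := isFiniteMeasure_of_le μ hle
  exact withDensity_rnDeriv_eq _ _ (absolutelyContinuous_of_le hle)

theorem MeasureTheory.Measure.ae_sum_rnDeriv_eq_one (h : ∑ c ∈ s, ν c = μ) :
    ∀ᵐ x ∂μ, ∑ c ∈ s, (ν c).rnDeriv μ x = 1 := by
  refine (withDensity_eq_iff_of_sigmaFinite (g := 1) (by fun_prop) (by fun_prop)).1 ?_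
  ext t ht
  rw [withDensity_apply _ ht, lintegral_finsetSum _ fun c _ => measurable_rnDeriv _ _,
    withDensity_one]
  conv_rhs => rw [← h, finsetSum_apply]
  refine Finset.sum_congr rfl fun c hc => ?_
  rw [← withDensity_apply _ ht, withDensity_rnDeriv_eq_of_sum_eq h hc]

end FiniteDecomposition

theorem exists_measure_map_prodMk_apply_eq {ι : Type*} [Fintype ι] [MeasurableSingletonClass β]
    (μ : Measure α) [IsFiniteMeasure μ] (π : ι → Measure (α × β))
    (hπ : ∀ i, (π i).map Prod.fst = μ) (A : ι → Finset β) (hA : ∀ i, ∀ᵐ p ∂π i, p.2 ∈ A i) :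
    ∃ γ : Measure (α × (ι → β)), ∀ i, γ.map (fun p => (p.1, p.2 i)) = π i := by
  classical
  set ν : ι → β → Measure α := fun i c => ((π i).restrict (Prod.snd ⁻¹' {c})).map Prod.fst
  have hdecomp : ∀ i, π i = ∑ c ∈ A i, (ν i c).map (fun x => (x, c)) := fun i =>
    (π i).eq_sum_map_prodMk_of_ae_snd_mem (A i) (hA i)
  have hsum : ∀ i, ∑ c ∈ A i, ν i c = μ := by
    intro i
    conv_rhs => rw [← hπ i, hdecomp i]
    rw [Measure.map_finset_sum (by fun_prop)]
    refine Finset.sum_congr rfl fun c _ => ?_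
    rw [map_map measurable_fst (by fun_prop)]
    exact map_id.symm
  set f : ι → β → α → ℝ≥0∞ := fun i c => (ν i c).rnDeriv μ
  have hf : ∀ i c, Measurable (f i c) := fun i c => measurable_rnDeriv _ _
  have hnormalized : ∀ᵐ x ∂μ, ∀ i, ∑ c ∈ A i, f i c x = 1 :=
    ae_all_iff.2 fun i => ae_sum_rnDeriv_eq_one (hsum i)
  -- Given `x`, the coordinates `y j` are independent with laws `∑ c ∈ A j, f j c x • δ c`.
  refine ⟨∑ y ∈ Fintype.piFinset A,
    (μ.withDensity fun x => ∏ j, f j (y j) x).map fun x => (x, y), fun i => ?_⟩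
  conv_rhs => rw [hdecomp i]
  refine ext_of_lintegral _ fun g hg => ?_
  have hgc : ∀ c, Measurable fun x => g (x, c) := fun c => by fun_prop
  rw [lintegral_map hg (by fun_prop), lintegral_finsetSum_measure, lintegral_finsetSum_measure]
  calc ∑ y ∈ Fintype.piFinset A, ∫⁻ p, g (p.1, p.2 i)
        ∂((μ.withDensity fun x => ∏ j, f j (y j) x).map fun x => (x, y))
      = ∑ y ∈ Fintype.piFinset A, ∫⁻ x, (∏ j, f j (y j) x) * g (x, y i) ∂μ := by
        refine Finset.sum_congr rfl fun y _ => ?_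
        rw [lintegral_map (by fun_prop) (by fun_prop),
          lintegral_withDensity_eq_lintegral_mul _ (by fun_prop) (hgc _)]
        rfl
    _ = ∫⁻ x, ∑ y ∈ Fintype.piFinset A, (∏ j, f j (y j) x) * g (x, y i) ∂μ :=
        (lintegral_finsetSum _ fun y _ => by fun_prop).symm
    _ = ∫⁻ x, ∑ c ∈ A i, f i c x * g (x, c) ∂μ :=
        lintegral_congr_ae <| hnormalized.mono fun x hx =>
          Finset.sum_piFinset_prod_mul A (fun j c => f j c x) (fun c => g (x, c)) i
            fun j _ => hx j
    _ = ∑ c ∈ A i, ∫⁻ p, g p ∂((ν i c).map fun x => (x, c)) := by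
        rw [lintegral_finsetSum _ fun c _ => by fun_prop]
        refine Finset.sum_congr rfl fun c hc => ?_
        rw [lintegral_map hg (by fun_prop), ← withDensity_rnDeriv_eq_of_sum_eq (hsum i) hc,
          lintegral_withDensity_eq_lintegral_mul _ (hf i c) (hgc c)]
        rfl

end Gluing

theorem lintegral_ofReal_sum_mul {ι Ω : Type*} [Fintype ι] [MeasurableSpace Ω] {μ : Measure Ω}
    {l : ι → ℝ} (hl : ∀ i, 0 ≤ l i) {h : ι → Ω → ℝ} (hh0 : ∀ i ω, 0 ≤ h i ω)
    (hh : ∀ i, Measurable (h i)) :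
    ∫⁻ ω, ENNReal.ofReal (∑ i, l i * h i ω) ∂μ
      = ∑ i, ENNReal.ofReal (l i) * ∫⁻ ω, ENNReal.ofReal (h i ω) ∂μ := by
  simp_rw [ENNReal.ofReal_sum_of_nonneg fun i _ => mul_nonneg (hl i) (hh0 i _),
    ENNReal.ofReal_mul (hl _)]
  rw [lintegral_finsetSum _ fun i _ => by fun_prop]
  simp_rw [lintegral_const_mul _ (hh _).ennreal_ofReal]

section Wasserstein

variable {d N : ℕ}

theorem W2sq_map_le_lintegral {Ω : Type*} [MeasurableSpace Ω] (γ : Measure Ω)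
    {X Y : Ω → Pt d} (hX : Measurable X) (hY : Measurable Y) :
    W2sq (γ.map X) (γ.map Y) ≤ ∫⁻ ω, ENNReal.ofReal (‖X ω - Y ω‖ ^ 2) ∂γ := by
  have hXY : Measurable fun ω => (X ω, Y ω) := hX.prodMk hY
  calc W2sq (γ.map X) (γ.map Y)
      ≤ ∫⁻ p, ENNReal.ofReal (‖p.1 - p.2‖ ^ 2) ∂(γ.map fun ω => (X ω, Y ω)) :=
        iInf₂_le _ ⟨by rw [Measure.map_map measurable_fst hXY]; rfl,
          by rw [Measure.map_map measurable_snd hXY]; rfl⟩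
    _ = _ := lintegral_map (by fun_prop) hXY

theorem phi_map_le_lintegral {l : Fin N → ℝ} (hl : ∀ i, 0 ≤ l i) {Pm : Fin N → Measure (Pt d)}
    {Ω : Type*} [MeasurableSpace Ω] (γ : Measure Ω) {X : Ω → Pt d} {Y : Fin N → Ω → Pt d}
    (hX : Measurable X) (hY : ∀ i, Measurable (Y i)) (hYm : ∀ i, γ.map (Y i) = Pm i) :
    phi l Pm (γ.map X) ≤ ∫⁻ ω, ENNReal.ofReal (∑ i, l i * ‖X ω - Y i ω‖ ^ 2) ∂γ := by
  rw [lintegral_ofReal_sum_mul hl (fun _ _ => sq_nonneg _) fun i => by fun_prop, phi]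
  gcongr with i
  rw [← hYm i]
  exact W2sq_map_le_lintegral γ hX (hY i)

theorem FinitelySupported.finiteSecondMoment {P : Measure (Pt d)} [IsFiniteMeasure P]
    (h : FinitelySupported P) : FiniteSecondMoment P := by
  obtain ⟨C, hC⟩ := (h.1.image fun x => ‖x‖ ^ 2).bddAbove
  have hbound : ∀ᵐ x ∂P, ENNReal.ofReal (‖x‖ ^ 2) ≤ ENNReal.ofReal C :=
    (ae_iff.2 h.2).mono fun x hx => ENNReal.ofReal_le_ofReal (hC ⟨x, hx, rfl⟩)
  calc ∫⁻ x, ENNReal.ofReal (‖x‖ ^ 2) ∂P ≤ ∫⁻ _, ENNReal.ofReal C ∂P := lintegral_mono_ae hbound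
    _ < ⊤ := by
      rw [lintegral_const]
      exact ENNReal.mul_lt_top ENNReal.ofReal_lt_top (measure_lt_top _ _)

theorem exists_coupling_lintegral_le_W2sq_add (P Q : Measure (Pt d)) [IsProbabilityMeasure P]
    [IsProbabilityMeasure Q] {ε : ℝ≥0∞} (hε : ε ≠ 0) :
    ∃ π : Measure (Pt d × Pt d), π.map Prod.fst = P ∧ π.map Prod.snd = Q ∧
      ∫⁻ p, ENNReal.ofReal (‖p.1 - p.2‖ ^ 2) ∂π ≤ W2sq P Q + ε := by
  by_cases hW : W2sq P Q = ⊤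
  · exact ⟨P.prod Q, by simp, by simp, by simp [hW]⟩
  have hlt := ENNReal.lt_add_right hW hε
  conv_lhs at hlt => rw [W2sq]
  simp only [iInf_lt_iff] at hlt
  obtain ⟨π, ⟨hπ1, hπ2⟩, hπ⟩ := hlt
  exact ⟨π, hπ1, hπ2, hπ.le⟩

end Wasserstein

section Barycenter

variable {d N : ℕ} {l : Fin N → ℝ} {Pm : Fin N → Measure (Pt d)}

theorem phi_add_lintegral_le_of_isBarycenter (hl0 : ∀ i, 0 ≤ l i) (hsum : ∑ i, l i = 1)
    (hmom : ∀ i, FiniteSecondMoment (Pm i)) {Pbar : Measure (Pt d)}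
    (hbar : IsBarycenter l Pm Pbar) (γ : Measure (Pt d × (Fin N → Pt d)))
    [IsProbabilityMeasure γ] (hγ : ∀ i, γ.map (fun p => p.2 i) = Pm i) :
    phi l Pm Pbar + ∫⁻ p, ENNReal.ofReal (‖p.1 - ∑ j, l j • p.2 j‖ ^ 2) ∂γ
      ≤ ∫⁻ p, ENNReal.ofReal (∑ i, l i * ‖p.1 - p.2 i‖ ^ 2) ∂γ := by
  set G : Pt d × (Fin N → Pt d) → Pt d := fun p => ∑ j, l j • p.2 j
  have hG : Measurable G := by fun_prop
  have hQmom : FiniteSecondMoment (γ.map G) := by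
    rw [FiniteSecondMoment, lintegral_map (by fun_prop) hG]
    calc ∫⁻ p, ENNReal.ofReal (‖G p‖ ^ 2) ∂γ
        ≤ ∫⁻ p, ENNReal.ofReal (∑ i, l i * ‖p.2 i‖ ^ 2) ∂γ :=
          lintegral_mono fun p => ENNReal.ofReal_le_ofReal (norm_sum_smul_sq_le hl0 hsum p.2)
      _ = ∑ i, ENNReal.ofReal (l i) * ∫⁻ x, ENNReal.ofReal (‖x‖ ^ 2) ∂(Pm i) := by
          rw [lintegral_ofReal_sum_mul hl0 (fun _ _ => sq_nonneg _) fun i => by fun_prop]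
          simp_rw [← hγ]
          refine Finset.sum_congr rfl fun i _ => ?_
          rw [lintegral_map (by fun_prop) (by fun_prop)]
      _ < ⊤ := ENNReal.sum_lt_top.2 fun i _ =>
          ENNReal.mul_lt_top ENNReal.ofReal_lt_top (hmom i)
  have hQ : phi l Pm Pbar ≤ ∫⁻ p, ENNReal.ofReal (∑ i, l i * ‖G p - p.2 i‖ ^ 2) ∂γ :=
    (hbar.2.2 _ (Measure.isProbabilityMeasure_map hG.aemeasurable) hQmom).trans
      (phi_map_le_lintegral hl0 γ hG (fun i => by fun_prop) hγ)
  calc phi l Pm Pbar + ∫⁻ p, ENNReal.ofReal (‖p.1 - G p‖ ^ 2) ∂γ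
      ≤ ∫⁻ p, ENNReal.ofReal (‖p.1 - G p‖ ^ 2) ∂γ
          + ∫⁻ p, ENNReal.ofReal (∑ i, l i * ‖G p - p.2 i‖ ^ 2) ∂γ := by
        rw [add_comm]; gcongr
    _ = ∫⁻ p, (ENNReal.ofReal (‖p.1 - G p‖ ^ 2)
          + ENNReal.ofReal (∑ i, l i * ‖G p - p.2 i‖ ^ 2)) ∂γ :=
        (lintegral_add_left (by fun_prop) _).symm
    _ = ∫⁻ p, ENNReal.ofReal (∑ i, l i * ‖p.1 - p.2 i‖ ^ 2) ∂γ := by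
        refine lintegral_congr fun p => ?_
        rw [sum_mul_norm_sub_sq_eq hsum p.1 p.2, ENNReal.ofReal_add (sq_nonneg _)
          (Finset.sum_nonneg fun i _ => mul_nonneg (hl0 i) (sq_nonneg _))]

theorem phi_map_le_of_forall_norm_sub_le (hl0 : ∀ i, 0 ≤ l i) (hsum : ∑ i, l i = 1)
    {S : Set (Pt d)} (hS : ∀ i, ∀ᵐ y ∂Pm i, y ∈ S) {n : Pt d → Pt d} (hn : Measurable n)
    (hnnear : ∀ x, ∀ s ∈ S, ‖n x - x‖ ≤ ‖s - x‖) {Pbar : Measure (Pt d)}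
    (γ : Measure (Pt d × (Fin N → Pt d))) (hγfst : γ.map Prod.fst = Pbar)
    (hγ : ∀ i, γ.map (fun p => p.2 i) = Pm i) {η : ℝ} (hη : 0 < η) :
    phi l Pm (Pbar.map n)
      ≤ ENNReal.ofReal (2 + η) * ∫⁻ p, ENNReal.ofReal (∑ i, l i * ‖p.1 - p.2 i‖ ^ 2) ∂γ
        + ENNReal.ofReal (1 + η⁻¹) * ∫⁻ p, ENNReal.ofReal (‖p.1 - ∑ j, l j • p.2 j‖ ^ 2) ∂γ := by
  have hmem : ∀ᵐ p ∂γ, ∀ i, p.2 i ∈ S :=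
    ae_all_iff.2 fun i => ae_of_ae_map (by fun_prop) ((hγ i).symm ▸ hS i)
  rw [← hγfst, Measure.map_map hn measurable_fst, ← lintegral_const_mul _ (by fun_prop),
    ← lintegral_const_mul _ (by fun_prop), ← lintegral_add_left (by fun_prop)]
  refine (phi_map_le_lintegral hl0 γ (by fun_prop) (fun i => by fun_prop) hγ).trans
    (lintegral_mono_ae (hmem.mono fun p hp => ?_))
  have hT : 0 ≤ ∑ i, l i * ‖p.1 - p.2 i‖ ^ 2 :=
    Finset.sum_nonneg fun i _ => mul_nonneg (hl0 i) (sq_nonneg _)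
  rw [← ENNReal.ofReal_mul (by positivity), ← ENNReal.ofReal_mul (by positivity),
    ← ENNReal.ofReal_add (by positivity) (by positivity)]
  refine ENNReal.ofReal_le_ofReal
    (sum_mul_norm_sub_sq_le_of_forall_norm_sub_le hl0 hsum hη fun i => ?_)
  rw [norm_sub_rev p.1]
  exact hnnear _ _ (hp i)

theorem phi_map_le_of_isBarycenter (hl0 : ∀ i, 0 ≤ l i) (hsum : ∑ i, l i = 1) (hprob : ∀ i, IsProbabilityMeasure (Pm i))
    (hfin : ∀ i, FinitelySupported (Pm i)) {Pbar : Measure (Pt d)}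
    (hbar : IsBarycenter l Pm Pbar) (hφ : phi l Pm Pbar ≠ ⊤) {n : Pt d → Pt d}
    (hn : Measurable n) (hnnear : ∀ x, ∀ s ∈ origSupport Pm, ‖n x - x‖ ≤ ‖s - x‖)
    {ε η : ℝ} (hε : 0 < ε) (hη : 0 < η) :
    phi l Pm (Pbar.map n)
      ≤ ENNReal.ofReal (2 + η) * (phi l Pm Pbar + ENNReal.ofReal ε)
        + ENNReal.ofReal (1 + η⁻¹) * ENNReal.ofReal ε := by
  have := hbar.1
  have hsupp : ∀ i, ∀ᵐ y ∂Pm i, y ∈ msupp (Pm i) := fun i => ae_iff.2 (hfin i).2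
  choose π hπfst hπsnd hπcost using fun i =>
    exists_coupling_lintegral_le_W2sq_add Pbar (Pm i) (ENNReal.ofReal_pos.2 hε).ne'
  obtain ⟨γ, hγ⟩ := exists_measure_map_prodMk_apply_eq Pbar π hπfst (fun i => (hfin i).1.toFinset)
    fun i => ae_of_ae_map (by fun_prop) <| by simpa [hπsnd i] using hsupp i
  have hγsnd : ∀ i, γ.map (fun p => p.2 i) = Pm i := fun i => by
    rw [← hπsnd i, ← hγ i, Measure.map_map measurable_snd (by fun_prop)]
    rfl
  obtain ⟨i₀⟩ : Nonempty (Fin N) := by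
    by_contra h
    rw [not_nonempty_iff] at h
    simp at hsum
  have hγfst : γ.map Prod.fst = Pbar := by
    rw [← hπfst i₀, ← hγ i₀, Measure.map_map measurable_fst (by fun_prop)]
    rfl
  have : IsProbabilityMeasure (γ.map Prod.fst) := hγfst ▸ hbar.1
  have : IsProbabilityMeasure γ := Measure.isProbabilityMeasure_of_map Prod.fst
  have hcost : ∫⁻ p, ENNReal.ofReal (∑ i, l i * ‖p.1 - p.2 i‖ ^ 2) ∂γ
      ≤ phi l Pm Pbar + ENNReal.ofReal ε := by
    rw [lintegral_ofReal_sum_mul hl0 (fun _ _ => sq_nonneg _) fun i => by fun_prop]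
    calc ∑ i, ENNReal.ofReal (l i) * ∫⁻ p, ENNReal.ofReal (‖p.1 - p.2 i‖ ^ 2) ∂γ
        = ∑ i, ENNReal.ofReal (l i) * ∫⁻ q, ENNReal.ofReal (‖q.1 - q.2‖ ^ 2) ∂π i := by
          simp_rw [← hγ]
          refine Finset.sum_congr rfl fun i _ => ?_
          rw [lintegral_map (by fun_prop) (by fun_prop)]
      _ ≤ ∑ i, ENNReal.ofReal (l i) * (W2sq Pbar (Pm i) + ENNReal.ofReal ε) := by
          gcongr with i
          exact hπcost i
      _ = phi l Pm Pbar + ENNReal.ofReal ε := by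
          have hl1 : ∑ i, ENNReal.ofReal (l i) = 1 := by
            rw [← ENNReal.ofReal_sum_of_nonneg fun i _ => hl0 i, hsum, ENNReal.ofReal_one]
          simp_rw [mul_add]
          rw [Finset.sum_add_distrib, ← Finset.sum_mul, hl1, one_mul, phi]
  have hdist : ∫⁻ p, ENNReal.ofReal (‖p.1 - ∑ j, l j • p.2 j‖ ^ 2) ∂γ ≤ ENNReal.ofReal ε :=
    (ENNReal.add_le_add_iff_left hφ).1 <|
      (phi_add_lintegral_le_of_isBarycenter hl0 hsum
        (fun i => (hfin i).finiteSecondMoment) hbar γ hγsnd).trans hcost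
  calc phi l Pm (Pbar.map n)
      ≤ ENNReal.ofReal (2 + η) * ∫⁻ p, ENNReal.ofReal (∑ i, l i * ‖p.1 - p.2 i‖ ^ 2) ∂γ
        + ENNReal.ofReal (1 + η⁻¹) * ∫⁻ p, ENNReal.ofReal (‖p.1 - ∑ j, l j • p.2 j‖ ^ 2) ∂γ :=
        phi_map_le_of_forall_norm_sub_le hl0 hsum
          (fun i => (hsupp i).mono fun y hy => Set.mem_iUnion.2 ⟨i, hy⟩) hn hnnear γ hγfst
          hγsnd hη
    _ ≤ _ := by gcongr

end Barycenter

open Filter Topology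

theorem rounded_barycenter_two_approx_general {d N : ℕ}
    (l : Fin N → ℝ) (Pm : Fin N → Measure (Pt d))
    (hl : ∀ i, 0 < l i) (hsum : ∑ i, l i = 1)
    (hprob : ∀ i, IsProbabilityMeasure (Pm i))
    (hfin : ∀ i, FinitelySupported (Pm i))
    (Pbar : Measure (Pt d)) (hbar : IsBarycenter l Pm Pbar)
    (n : Pt d → Pt d) (hn : Measurable n)
    (hnnear : ∀ x, ∀ s ∈ origSupport Pm, ‖n x - x‖ ≤ ‖s - x‖) :
    phi l Pm (Pbar.map n) ≤ 2 * phi l Pm Pbar := by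
  by_cases hφ : phi l Pm Pbar = ⊤
  · simp [hφ]
  set B := (phi l Pm Pbar).toReal
  have hB : 0 ≤ B := ENNReal.toReal_nonneg
  -- With `ε = η²` the error term `(1 + η⁻¹) ε` also vanishes as `η → 0`.
  have hbound : ∀ η > 0,
      phi l Pm (Pbar.map n) ≤ ENNReal.ofReal ((2 + η) * (B + η ^ 2) + (η ^ 2 + η)) := by
    intro η hη
    have h := phi_map_le_of_isBarycenter (fun i => (hl i).le) hsum hprob hfin hbar hφ hn hnnear
      (pow_pos hη 2) hη
    rwa [← ENNReal.ofReal_toReal hφ, ← ENNReal.ofReal_add hB (by positivity),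
      ← ENNReal.ofReal_mul (by positivity), ← ENNReal.ofReal_mul (by positivity),
      ← ENNReal.ofReal_add (by positivity) (by positivity),
      show (1 + η⁻¹) * η ^ 2 = η ^ 2 + η by field_simp] at h
  have hlim : Tendsto (fun η => ENNReal.ofReal ((2 + η) * (B + η ^ 2) + (η ^ 2 + η))) (𝓝[>] 0)
      (𝓝 (ENNReal.ofReal (2 * B))) := by
    have hc : Continuous fun η : ℝ => (2 + η) * (B + η ^ 2) + (η ^ 2 + η) := by fun_prop
    simpa using ENNReal.tendsto_ofReal ((hc.tendsto 0).mono_left nhdsWithin_le_nhds)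
  calc phi l Pm (Pbar.map n) ≤ ENNReal.ofReal (2 * B) :=
        ge_of_tendsto hlim (eventually_nhdsWithin_of_forall hbound)
    _ = 2 * phi l Pm Pbar := by
        rw [ENNReal.ofReal_mul zero_le_two, ENNReal.ofReal_ofNat, ENNReal.ofReal_toReal hφ]

/-- rounding a barycenter to nearest points of the union of the
original supports gives a 2-approximation: φ(P̄_r) ≤ 2 φ(P̄). -/
theorem rounded_barycenter_two_approx {d N : ℕ}
    (l : Fin N → ℝ) (Pm : Fin N → Measure (Pt d))
    (hl : ∀ i, 0 < l i) (hsum : ∑ i, l i = 1)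
    (hprob : ∀ i, IsProbabilityMeasure (Pm i))
    (hfin : ∀ i, FinitelySupported (Pm i))
    (Pbar : Measure (Pt d)) (hbar : IsBarycenter l Pm Pbar)
    (n : Pt d → Pt d) (hn : Measurable n)
    (hnmem : ∀ x, n x ∈ origSupport Pm)
    (hnnear : ∀ x, ∀ s ∈ origSupport Pm, ‖n x - x‖ ≤ ‖s - x‖) :
    phi l Pm (Pbar.map n) ≤ 2 * phi l Pm Pbar :=
  rounded_barycenter_two_approx_general l Pm hl hsum hprob hfin Pbar hbar n hn hnnear
end
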